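/- In pruning-enabled perfect tracking, a node is retained in the tree T if and only if it is alive or is an ancestor of some living node. -/
import Mathlib


/-- A node is removed by the pruning process iff it is dead and all of its children
have been removed. -/
inductive Removed {α : Type*} (parent : α → Option α) (alive : α → Prop) : α → Prop where
  | mk (v : α) (hdead : ¬ alive v)
      (hchildren : ∀ u, parent u = some v → Removed parent alive u) :
      Removed parent alive v

/-- In pruning-enabled perfect tracking on a rooted forest (child-to-parent map with
well-founded child relation), a node is retained in the tree iff it is alive or is an
ancestor of some living node. -/
theorem retained_iff_alive_or_ancestor_of_living {α : Type*}
    (parent : α → Option α) (alive : α → Prop)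
    (hwf : WellFounded (fun u v : α => parent u = some v)) (v : α) :
    ¬ Removed parent alive v ↔
      alive v ∨ ∃ x, alive x ∧
        Relation.ReflTransGen (fun a b : α => parent a = some b) x v := by
  constructor
  · -- forward by well-founded induction
    induction v using hwf.induction with
    | _ v ih =>
      intro hnr
      by_cases hv : alive v
      · exact Or.inl hv
      · right
        by_cases hch : ∃ u, parent u = some v ∧ ¬ Removed parent alive u
        · obtain ⟨u, hu, hnu⟩ := hch
          rcases ih u hu hnu with h | ⟨x, hx, hxu⟩
          · exact ⟨u, h, Relation.ReflTransGen.single hu⟩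
          · exact ⟨x, hx, hxu.tail hu⟩
        · push_neg at hch
          exact absurd (Removed.mk v hv (fun u hu => hch u hu)) hnr
  · rintro (hv | ⟨x, hx, hxv⟩) hr
    · rcases hr with ⟨_, hdead, _⟩; exact hdead hv
    · have key : ∀ y, Relation.ReflTransGen (fun a b : α => parent a = some b) y v →
          Removed parent alive y := by
        intro y hyv
        induction hyv using Relation.ReflTransGen.head_induction_on with
        | refl => exact hr
        | head hab _ ihb =>
          rcases ihb with ⟨_, _, hchildren⟩
          exact hchildren _ hab
      rcases key x hxv with ⟨_, hdead, _⟩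
      exact hdead hx
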